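/- arXiv:2002.01757 — 2 statements merged into one kernel-verified Lean document; each statement's English description precedes it below -/
import Mathlib

section
/- Let m, k, δ ∈ ℕ with 0 < m < k, and let v : ℕ → {0,1} be an admissible attack signal, i.e., for every t ∈ ℕ the window {t, t+1, …, t+k−1} contains at least m indices s with v(s) = 1. Set T = (⌊δ/m⌋+1)(k−m) + δ. Then the set {s ∈ ℕ : s < T and v(s) = 1} contains at least δ elements. Equivalently: the number of consecutive time instants needed to accumulate δ instants at which the control input is not deactivated is at most (⌊δ/m⌋+1)(k−m) + δ. -/
/-!
With `n = ⌊δ/m⌋`, the first `n + 1` blocks of `k` consecutive instants contain at least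
`(n + 1) m = δ + (m - δ % m)` deliveries, and the horizon `T = (n + 1)(k - m) + δ` falls short of
the end `(n + 1) k` of these blocks by exactly `m - δ % m` instants, which can hold at most that
many of them.
-/

open Finset

namespace Nat

variable {p : ℕ → Prop} [DecidablePred p]

theorem count_eq_count_add_card_filter_Ico {a b : ℕ} (hab : a ≤ b) :
    count p b = count p a + #{x ∈ Ico a b | p x} := by
  rw [count_eq_card_filter_range, count_eq_card_filter_range, range_eq_Ico, range_eq_Ico,
    ← Ico_union_Ico_eq_Ico a.zero_le hab, filter_union,
    card_union_of_disjoint (disjoint_filter_filter (Ico_disjoint_Ico_consecutive 0 a b))]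

theorem count_le_count_add_sub {a b : ℕ} (hab : a ≤ b) : count p b ≤ count p a + (b - a) := by
  rw [count_eq_count_add_card_filter_Ico hab, ← card_Ico a b]
  exact Nat.add_le_add_left (card_filter_le _ _) _

theorem mul_le_count_mul {m k : ℕ} (hwindow : ∀ t, m ≤ #{x ∈ Ico t (t + k) | p x}) (n : ℕ) :
    n * m ≤ count p (n * k) := by
  induction n with
  | zero => simp
  | succ n ih =>
    rw [succ_mul, succ_mul, count_eq_count_add_card_filter_Ico (le_add_right _ _)]
    exact Nat.add_le_add ih (hwindow _)

end Nat

theorem attack_signal_delta_closed_loop_general (m k δ : ℕ) (hm : 0 < m)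
    (v : ℕ → Bool)
    (hadm : ∀ t : ℕ, m ≤ ((Finset.Ico t (t + k)).filter (fun s => v s = true)).card) :
    δ ≤ ((Finset.range ((δ / m + 1) * (k - m) + δ)).filter (fun s => v s = true)).card := by
  have hmk : m ≤ k := (hadm 0).trans <| by simpa using card_filter_le (Ico 0 (0 + k)) _
  obtain ⟨j, rfl⟩ := Nat.exists_eq_add_of_le hmk
  rw [Nat.add_sub_cancel_left, ← Nat.count_eq_card_filter_range]
  set n := δ / m
  have hδ : m * n + δ % m = δ := Nat.div_add_mod δ m
  have hr : δ % m < m := Nat.mod_lt δ hm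
  have hend : (n + 1) * (m + j) = (n + 1) * j + δ + (m - δ % m) := by
    rw [mul_add, mul_comm (n + 1), mul_add_one]; omega
  have hfull := Nat.mul_le_count_mul hadm (n + 1)
  have htail := Nat.count_le_count_add_sub (p := fun s => v s = true)
    (a := (n + 1) * j + δ) (b := (n + 1) * (m + j)) (by omega)
  rw [hend] at hfull htail
  have hblocks : (n + 1) * m = m * n + m := by ring
  omega

/-- Lemma 1: if `v : ℕ → Bool` is an admissible attack signal for the `(m,k)`-firm model
(in every `k` consecutive time instants, `v = true` at least `m` times), then among the
first `T = (⌊δ/m⌋+1)(k−m) + δ` time instants there are at least `δ` instants `s` with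
`v s = true`. -/
theorem attack_signal_delta_closed_loop (m k δ : ℕ) (hm : 0 < m) (hmk : m < k)
    (v : ℕ → Bool)
    (hadm : ∀ t : ℕ, m ≤ ((Finset.Ico t (t + k)).filter (fun s => v s = true)).card) :
    δ ≤ ((Finset.range ((δ / m + 1) * (k - m) + δ)).filter (fun s => v s = true)).card :=
  attack_signal_delta_closed_loop_general m k δ hm v hadm
end

section
/- Let d, L ∈ ℕ, let A, B ∈ ℝ^{d×d}, and set E = AB − BA. Let w : {1, …, L} → ℝ^{d×d} be a word with w(j) ∈ {A, B} for every j, let a = |{j : w(j) = A}| and b = |{j : w(j) = B}| (so a + b = L), and assume a ≥ 1 and b ≥ 1. Let ν = |{(i,j) : 1 ≤ i < j ≤ L, w(i) = B, w(j) = A}| be the number of inversions of the word. Then ‖w(1)·w(2)·⋯·w(L) − A^a B^b‖ ≤ ν · ‖A‖^{a−1} · ‖B‖^{b−1} · ‖E‖. -/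
/-- The matrix norm on `d × d` real matrices induced by the Euclidean vector norm
(the spectral norm). -/
noncomputable def specNorm {d : ℕ} (A : Matrix (Fin d) (Fin d) ℝ) : ℝ :=
  ‖(Matrix.toEuclideanCLM (𝕜 := ℝ) A :
      EuclideanSpace ℝ (Fin d) →L[ℝ] EuclideanSpace ℝ (Fin d))‖

open scoped Matrix.Norms.L2Operator

namespace WordRearrangeAux

variable {d : ℕ}

local notation "M" => Matrix (Fin d) (Fin d) ℝ

lemma specNorm_eq (A : M) : specNorm A = ‖A‖ := rfl

/-- number of inversions (a `false` before a `true`) in a boolean word -/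
def invB : List Bool → ℕ
  | [] => 0
  | x :: xs => (if x = false then xs.count true else 0) + invB xs

@[simp] lemma invB_nil : invB [] = 0 := rfl
@[simp] lemma invB_cons (x : Bool) (xs : List Bool) :
    invB (x :: xs) = (if x = false then xs.count true else 0) + invB xs := rfl

lemma invB_append (u v : List Bool) :
    invB (u ++ v) = invB u + invB v + u.count false * v.count true := by
  induction u with
  | nil => simp
  | cons x xs ih =>
      cases x <;> simp [ih, List.count_append, List.count_cons] <;> ring

lemma head_true_of_invB_zero : ∀ l : List Bool, invB l = 0 → l.count true ≠ 0 →
    ∃ r, l = true :: r := by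
  intro l hl hc
  match l with
  | [] => simp at hc
  | true :: r => exact ⟨r, rfl⟩
  | false :: r =>
      exfalso
      simp [List.count_cons] at hl hc
      omega

lemma exists_adjacent_inversion : ∀ l : List Bool, invB l ≠ 0 →
    ∃ u v, l = u ++ false :: true :: v := by
  intro l
  induction l with
  | nil => simp
  | cons x xs ih =>
      intro hl
      by_cases hxs : invB xs = 0
      · simp [hxs] at hl
        have hx : x = false := by
          by_contra h; simp [h] at hl
        have hc : xs.count true ≠ 0 := by
          subst hx; simpa using hl
        obtain ⟨r, hr⟩ := head_true_of_invB_zero xs hxs hc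
        exact ⟨[], r, by rw [hx, hr]; rfl⟩
      · obtain ⟨u, v, huv⟩ := ih hxs
        exact ⟨x :: u, v, by rw [huv]; rfl⟩

lemma count_ofFn (x : Bool) : ∀ {L : ℕ} (c : Fin L → Bool),
    (List.ofFn c).count x = ∑ j, if c j = x then 1 else 0 := by
  intro L
  induction L with
  | zero => simp
  | succ n ih =>
      intro c
      rw [List.ofFn_succ, List.count_cons, ih, Fin.sum_univ_succ]
      simp [add_comm, Function.comp, beq_iff_eq]

lemma invB_ofFn : ∀ {L : ℕ} (c : Fin L → Bool),
    invB (List.ofFn c) = ∑ i, ∑ j,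
      if (i < j ∧ c i = false ∧ c j = true) then 1 else 0 := by
  intro L
  induction L with
  | zero => simp [invB]
  | succ n ih =>
      intro c
      rw [List.ofFn_succ, invB_cons, ih, Fin.sum_univ_succ]
      congr 1
      · rw [Fin.sum_univ_succ]
        have h0 : ¬ ((0 : Fin (n+1)) < 0) := lt_irrefl _
        simp only [h0, false_and, if_false, zero_add]
        by_cases hc : c 0 = false
        · simp only [hc, if_true, count_ofFn]
          refine Finset.sum_congr rfl fun j _ => ?_
          simp [Fin.succ_pos, Function.comp]
        · simp [hc]
      · refine Finset.sum_congr rfl fun i _ => ?_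
        rw [Fin.sum_univ_succ]
        have h0 : ¬ ((Fin.succ i : Fin (n+1)) < 0) := by simp
        simp only [h0, false_and, if_false, zero_add]
        refine Finset.sum_congr rfl fun j _ => ?_
        simp [Fin.succ_lt_succ_iff, Function.comp]

lemma norm_one_le : ‖(1 : M)‖ ≤ 1 := by
  rw [Matrix.cstar_norm_def, map_one]; exact ContinuousLinearMap.norm_id_le

lemma prod_norm_le (A B : M) : ∀ l : List Bool,
    ‖(l.map (fun x => cond x A B)).prod‖ ≤ ‖A‖ ^ l.count true * ‖B‖ ^ l.count false := by
  intro l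
  induction l with
  | nil => simpa using norm_one_le
  | cons x xs ih =>
      have hP : (0:ℝ) ≤ ‖(xs.map (fun x => cond x A B)).prod‖ := norm_nonneg _
      cases x
      · calc ‖(List.map (fun x => cond x A B) (false :: xs)).prod‖
            ≤ ‖B‖ * ‖(xs.map (fun x => cond x A B)).prod‖ := by
              simpa using norm_mul_le B _
          _ ≤ ‖B‖ * (‖A‖ ^ xs.count true * ‖B‖ ^ xs.count false) :=
              mul_le_mul_of_nonneg_left ih (norm_nonneg B)
          _ = ‖A‖ ^ (false :: xs).count true * ‖B‖ ^ (false :: xs).count false := by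
              simp [List.count_cons, pow_succ]; ring
      · calc ‖(List.map (fun x => cond x A B) (true :: xs)).prod‖
            ≤ ‖A‖ * ‖(xs.map (fun x => cond x A B)).prod‖ := by
              simpa using norm_mul_le A _
          _ ≤ ‖A‖ * (‖A‖ ^ xs.count true * ‖B‖ ^ xs.count false) :=
              mul_le_mul_of_nonneg_left ih (norm_nonneg A)
          _ = ‖A‖ ^ (true :: xs).count true * ‖B‖ ^ (true :: xs).count false := by
              simp [List.count_cons, pow_succ]; ring

lemma prod_of_invB_zero (A B : M) : ∀ l : List Bool, invB l = 0 →
    (l.map (fun x => cond x A B)).prod = A ^ l.count true * B ^ l.count false := by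
  intro l
  induction l with
  | nil => simp
  | cons x xs ih =>
      intro hl
      cases x
      · simp only [invB_cons, if_pos rfl, if_true, Nat.add_eq_zero] at hl
        obtain ⟨h1, h2⟩ := hl
        rw [List.map_cons, List.prod_cons, ih h2]
        simp [List.count_cons, h1, pow_succ', mul_assoc]
      · have h2 : invB xs = 0 := by simpa using hl
        rw [List.map_cons, List.prod_cons, ih h2]
        simp [List.count_cons, pow_succ', mul_assoc]

lemma key (A B E : M) (hE : E = A * B - B * A) :
    ∀ (n : ℕ) (l : List Bool), invB l ≤ n →
      ‖(l.map (fun x => cond x A B)).prod - A ^ l.count true * B ^ l.count false‖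
        ≤ (invB l : ℝ) * ‖A‖ ^ (l.count true - 1) * ‖B‖ ^ (l.count false - 1) * ‖E‖ := by
  intro n
  induction n with
  | zero =>
      intro l hl
      have h0 : invB l = 0 := Nat.le_zero.mp hl
      rw [prod_of_invB_zero A B l h0, sub_self, norm_zero, h0]
      simp
  | succ n ih =>
      intro l hl
      by_cases h0 : invB l = 0
      · rw [prod_of_invB_zero A B l h0, sub_self, norm_zero, h0]; simp
      · obtain ⟨u, v, huv⟩ := exists_adjacent_inversion l h0
        subst huv
        set f : Bool → M := fun x => cond x A B with hf
        set Pu := (u.map f).prod with hPudef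
        set Pv := (v.map f).prod with hPvdef
        set a1 := u.count true + v.count true with ha1
        set b1 := u.count false + v.count false with hb1
        have hctl : (u ++ false :: true :: v).count true = a1 + 1 := by
          simp [List.count_append, List.count_cons, ha1]; omega
        have hcfl : (u ++ false :: true :: v).count false = b1 + 1 := by
          simp [List.count_append, List.count_cons, hb1]; omega
        have hctl' : (u ++ true :: false :: v).count true = a1 + 1 := by
          simp [List.count_append, List.count_cons, ha1]; omega
        have hcfl' : (u ++ true :: false :: v).count false = b1 + 1 := by
          simp [List.count_append, List.count_cons, hb1]; omega
        have hinv : invB (u ++ false :: true :: v)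
            = invB (u ++ true :: false :: v) + 1 := by
          simp [invB_append, invB_cons, List.count_cons]
          omega
        have hinvle : invB (u ++ true :: false :: v) ≤ n := by omega
        have hIH := ih (u ++ true :: false :: v) hinvle
        rw [hctl', hcfl'] at hIH
        simp only [Nat.add_sub_cancel] at hIH
        have hprodl : ((u ++ false :: true :: v).map f).prod
            = Pu * (B * (A * Pv)) := by
          simp [hPudef, hPvdef, List.prod_append, hf, mul_assoc]
        have hprodl' : ((u ++ true :: false :: v).map f).prod
            = Pu * (A * (B * Pv)) := by
          simp [hPudef, hPvdef, List.prod_append, hf, mul_assoc]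
        have hid : ((u ++ false :: true :: v).map f).prod - A ^ (a1+1) * B ^ (b1+1)
            = (((u ++ true :: false :: v).map f).prod - A ^ (a1+1) * B ^ (b1+1))
              - Pu * (E * Pv) := by
          rw [hprodl, hprodl', hE]
          noncomm_ring
        have hPu : ‖Pu‖ ≤ ‖A‖ ^ u.count true * ‖B‖ ^ u.count false := prod_norm_le A B u
        have hPv : ‖Pv‖ ≤ ‖A‖ ^ v.count true * ‖B‖ ^ v.count false := prod_norm_le A B v
        have h2 : ‖Pu * (E * Pv)‖ ≤ ‖A‖ ^ a1 * ‖B‖ ^ b1 * ‖E‖ := by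
          have s1 : ‖Pu * (E * Pv)‖ ≤ ‖Pu‖ * (‖E‖ * ‖Pv‖) :=
            le_trans (norm_mul_le _ _)
              (mul_le_mul_of_nonneg_left (norm_mul_le _ _) (norm_nonneg _))
          have s2 : ‖Pu‖ * (‖E‖ * ‖Pv‖)
              ≤ (‖A‖ ^ u.count true * ‖B‖ ^ u.count false)
                * (‖E‖ * (‖A‖ ^ v.count true * ‖B‖ ^ v.count false)) := by
            apply mul_le_mul hPu _ (by positivity) (by positivity)
            exact mul_le_mul_of_nonneg_left hPv (norm_nonneg _)
          calc ‖Pu * (E * Pv)‖ ≤ _ := le_trans s1 s2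
            _ = ‖A‖ ^ a1 * ‖B‖ ^ b1 * ‖E‖ := by rw [ha1, hb1, pow_add, pow_add]; ring
        rw [hctl, hcfl, hinv]
        simp only [Nat.add_sub_cancel]
        push_cast
        calc ‖((u ++ false :: true :: v).map f).prod - A ^ (a1+1) * B ^ (b1+1)‖
            = ‖(((u ++ true :: false :: v).map f).prod - A ^ (a1+1) * B ^ (b1+1))
                - Pu * (E * Pv)‖ := by rw [hid]
          _ ≤ ‖((u ++ true :: false :: v).map f).prod - A ^ (a1+1) * B ^ (b1+1)‖
                + ‖Pu * (E * Pv)‖ := norm_sub_le _ _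
          _ ≤ (invB (u ++ true :: false :: v) : ℝ) * ‖A‖ ^ a1 * ‖B‖ ^ b1 * ‖E‖
                + ‖A‖ ^ a1 * ‖B‖ ^ b1 * ‖E‖ := add_le_add hIH h2
          _ = ((invB (u ++ true :: false :: v) : ℝ) + 1) * ‖A‖ ^ a1 * ‖B‖ ^ b1 * ‖E‖ := by
                ring

end WordRearrangeAux

open WordRearrangeAux in
/-- Rearrangement estimate: a word `w` in the letters `A` and `B`, with `a` occurrences
of `A`, `b` occurrences of `B` (`a + b = L`, `a, b ≥ 1`) and `ν` inversions (pairs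
`i < j` with `w i = B` and `w j = A`), satisfies
`‖w(1)⋯w(L) − A^a B^b‖ ≤ ν ‖A‖^{a−1} ‖B‖^{b−1} ‖E‖` where `E = AB − BA`. -/
theorem word_rearrangement_commutator_bound (d L : ℕ)
    (A B : Matrix (Fin d) (Fin d) ℝ)
    (E : Matrix (Fin d) (Fin d) ℝ) (hE : E = A * B - B * A)
    (w : Fin L → Matrix (Fin d) (Fin d) ℝ)
    (hw : ∀ j, w j = A ∨ w j = B)
    (a b : ℕ)
    (ha_def : a = (Finset.univ.filter (fun j : Fin L => w j = A)).card)
    (hb_def : b = (Finset.univ.filter (fun j : Fin L => w j = B)).card)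
    (hab : a + b = L)
    (ha : 1 ≤ a) (hb : 1 ≤ b)
    (ν : ℕ)
    (hν : ν = (Finset.univ.filter
      (fun p : Fin L × Fin L => p.1 < p.2 ∧ w p.1 = B ∧ w p.2 = A)).card) :
    specNorm ((List.ofFn w).prod - A ^ a * B ^ b) ≤
      (ν : ℝ) * specNorm A ^ (a - 1) * specNorm B ^ (b - 1) * specNorm E := by
  classical
  -- A ≠ B
  have hAB : A ≠ B := by
    intro h
    have hA : ∀ j, w j = A := fun j => (hw j).elim id (fun hj => hj.trans h.symm)
    have hB : ∀ j, w j = B := fun j => (hA j).trans h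
    have haL : a = L := by
      rw [ha_def, Finset.filter_true_of_mem (fun j _ => hA j)]
      simp
    have hbL : b = L := by
      rw [hb_def, Finset.filter_true_of_mem (fun j _ => hB j)]
      simp
    omega
  set c : Fin L → Bool := fun j => decide (w j = A) with hc
  have hcA : ∀ j, (c j = true) ↔ (w j = A) := by intro j; simp [hc]
  have hcB : ∀ j, (c j = false) ↔ (w j = B) := by
    intro j
    rw [← Bool.not_eq_true, hcA j]
    constructor
    · intro hh; exact (hw j).resolve_left hh
    · intro hh hA; exact hAB (hA.symm.trans hh)
  have hwc : w = fun j => cond (c j) A B := by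
    funext j
    rcases hw j with h | h
    · rw [h, (hcA j).mpr h]; rfl
    · rw [h, (hcB j).mpr h]; rfl
  have hofn : List.ofFn w = (List.ofFn c).map (fun x => cond x A B) := by
    rw [List.map_ofFn]
    exact congrArg List.ofFn hwc
  have hct : (List.ofFn c).count true = a := by
    rw [count_ofFn, ha_def, Finset.card_filter]
    refine Finset.sum_congr rfl fun j _ => ?_
    by_cases h : w j = A
    · simp [(hcA j).mpr h, h]
    · have h' : ¬ (c j = true) := fun hh => h ((hcA j).mp hh)
      simp [h, h']
  have hcf : (List.ofFn c).count false = b := by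
    rw [count_ofFn, hb_def, Finset.card_filter]
    refine Finset.sum_congr rfl fun j _ => ?_
    by_cases h : w j = B
    · simp [(hcB j).mpr h, h]
    · have h' : ¬ (c j = false) := fun hh => h ((hcB j).mp hh)
      simp [h, h']
  have hν' : (ν : ℕ) = invB (List.ofFn c) := by
    rw [invB_ofFn, hν, Finset.card_filter, ← Finset.univ_product_univ,
      Finset.sum_product]
    refine Finset.sum_congr rfl fun i _ => Finset.sum_congr rfl fun j _ => ?_
    by_cases hij : i < j
    · by_cases h1 : w i = B
      · by_cases h2 : w j = A
        · simp [hij, h1, h2, (hcB i).mpr h1, (hcA j).mpr h2]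
        · have h2' : ¬ (c j = true) := fun hh => h2 ((hcA j).mp hh)
          simp [hij, h2, h2']
      · have h1' : ¬ (c i = false) := fun hh => h1 ((hcB i).mp hh)
        simp [hij, h1, h1']
    · simp [hij]
  have := key A B E hE (invB (List.ofFn c)) (List.ofFn c) le_rfl
  rw [hct, hcf, ← hν'] at this
  simp only [specNorm_eq]
  rw [hofn]
  exact this
end
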